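/- Let S = K[t_1,…,t_s] be a polynomial ring over a field K and let I ⊊ m = (t_1,…,t_s) be a graded ideal of S with dim(S/I) = 0. Then the minimum socle degree s(I) = α((I : m)/I) of S/I is equal to the v-number v(I). -/

import Mathlib

open MvPolynomial Filter

noncomputable section

namespace GMDPaper

open scoped Classical

variable {K : Type*} [Field K] {s : ℕ}

/-- `I` is a graded (homogeneous) ideal of `S = K[t_1,…,t_s]`: it contains all
homogeneous components of its elements. -/
def IsGradedIdeal (I : Ideal (MvPolynomial (Fin s) K)) : Prop :=
  ∀ f ∈ I, ∀ d : ℕ, (MvPolynomial.homogeneousComponent d f) ∈ I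

/-- `I` is unmixed: all associated primes of `S/I` have the same height. -/
def Unmixed (I : Ideal (MvPolynomial (Fin s) K)) : Prop :=
  ∀ p q : PrimeSpectrum (MvPolynomial (Fin s) K),
    p.asIdeal ∈ associatedPrimes (MvPolynomial (Fin s) K) (MvPolynomial (Fin s) K ⧸ I) →
    q.asIdeal ∈ associatedPrimes (MvPolynomial (Fin s) K) (MvPolynomial (Fin s) K ⧸ I) →
    Order.height p = Order.height q

/-- The Krull dimension of a commutative ring, as a natural number. -/
def dimNat (R : Type*) [CommRing R] : ℕ :=
  WithTop.untopD 0 (WithBot.unbotD 0 (ringKrullDim R))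

/-- The Hilbert function of `S/I`: `H_I(d) = dim_K (S/I)_d = dim_K S_d/I_d`. -/
def hilbertFn (I : Ideal (MvPolynomial (Fin s) K)) (d : ℕ) : ℕ :=
  Module.finrank K
    ((MvPolynomial.homogeneousSubmodule (Fin s) K d).map
      (Ideal.Quotient.mkₐ K I).toLinearMap)

/-- The degree (multiplicity) of `S/I`: if `k = dim S/I = 0` it is `dim_K S/I`;
if `k ≥ 1` it is `(k-1)! ⬝ lim_{d→∞} H_I(d)/d^(k-1)`. -/
def degQ (I : Ideal (MvPolynomial (Fin s) K)) : ℝ :=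
  if dimNat (MvPolynomial (Fin s) K ⧸ I) = 0 then
    (Module.finrank K (MvPolynomial (Fin s) K ⧸ I) : ℝ)
  else
    (Nat.factorial (dimNat (MvPolynomial (Fin s) K ⧸ I) - 1) : ℝ) *
      limUnder atTop
        (fun d : ℕ => (hilbertFn I d : ℝ) /
          (d : ℝ) ^ (dimNat (MvPolynomial (Fin s) K ⧸ I) - 1))

/-- The irrelevant maximal ideal `m = (t_1, …, t_s)`. -/
def irrIdeal (K : Type*) [Field K] (s : ℕ) : Ideal (MvPolynomial (Fin s) K) :=
  Ideal.span (Set.range (MvPolynomial.X : Fin s → MvPolynomial (Fin s) K))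

/-- The v-number of `I`: the least `d ≥ 1` admitting `f ∈ S_d` and an associated
prime `p` of `I` with `(I : f) = p`. -/
def vnum (I : Ideal (MvPolynomial (Fin s) K)) : ℕ :=
  sInf {d : ℕ | 1 ≤ d ∧ ∃ f ∈ MvPolynomial.homogeneousSubmodule (Fin s) K d,
    ∃ p ∈ associatedPrimes (MvPolynomial (Fin s) K) (MvPolynomial (Fin s) K ⧸ I),
      Submodule.colon I (Ideal.span {f}) = p}

/-- `α((I : p)/I)`: the least degree of a nonzero homogeneous element of the graded
module `(I : p)/I`, i.e. the least `d` admitting a homogeneous `f` of degree `d`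
with `f ∈ (I : p)` and `f ∉ I`. -/
def alphaColon (I p : Ideal (MvPolynomial (Fin s) K)) : ℕ :=
  sInf {d : ℕ | ∃ f ∈ MvPolynomial.homogeneousSubmodule (Fin s) K d,
    f ∈ Submodule.colon I p ∧ f ∉ I}

/-! Since `I` is graded and `dim S/I = 0`, the only prime containing `I` is `m`: the homogeneous
core of such a prime is again a prime over `I`, hence maximal, and a proper homogeneous ideal lies
in `m`. So `Ass(S/I) = {m}`, and as `(I : f)` is proper exactly when `f ∉ I`, maximality of `m`
gives `(I : f) = m` iff `f ∈ (I : m) \ I`. Both invariants are therefore the least degree of a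
homogeneous element of `(I : m) \ I`; such an element is not a nonzero constant since `I ≠ m`,
which accounts for the bound `d ≥ 1` in the v-number. -/

attribute [local instance] MvPolynomial.gradedAlgebra

section CommRing

variable {R : Type*} [CommRing R] {I J m : Ideal R} {f : R}

theorem mem_colon_iff_le_colon_span_singleton :
    f ∈ I.colon J ↔ J ≤ I.colon (Ideal.span {f}) := by
  simp_rw [SetLike.le_def, Ideal.mem_colon_span_singleton, Submodule.mem_colon, smul_eq_mul,
    mul_comm f, SetLike.mem_coe]

theorem colon_span_singleton_eq_top_iff : I.colon (Ideal.span {f}) = ⊤ ↔ f ∈ I := by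
  rw [Ideal.eq_top_iff_one, Ideal.mem_colon_span_singleton, one_mul]

theorem le_of_isUnit_of_mem_colon (hf : IsUnit f) (hfc : f ∈ I.colon J) : J ≤ I := by
  intro g hg
  have hfg : f * g ∈ I := by simpa using Submodule.mem_colon.mp hfc g hg
  simpa [← mul_assoc] using I.mul_mem_left (hf.unit⁻¹ : Rˣ) hfg

theorem colon_span_singleton_eq_iff_of_isMaximal (hm : m.IsMaximal) :
    I.colon (Ideal.span {f}) = m ↔ f ∈ I.colon m ∧ f ∉ I := by
  rw [mem_colon_iff_le_colon_span_singleton, ← colon_span_singleton_eq_top_iff]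
  exact ⟨fun h => ⟨h.ge, h ▸ hm.ne_top⟩, fun ⟨hle, hne⟩ => (hm.eq_of_le hne hle).symm⟩

theorem _root_.Ideal.IsPrime.isMaximal_of_le_of_krullDimLE_zero [Ring.KrullDimLE 0 (R ⧸ I)]
    {p : Ideal R} (hp : p.IsPrime) (hIp : I ≤ p) : p.IsMaximal := by
  obtain ⟨q, hq, hqp⟩ := Ideal.exists_minimalPrimes_le hIp
  have hqmax : q.IsMaximal :=
    Ideal.krullDimLE_zero_quotient_iff_forall_minimalPrimes_isMaximal.mp ‹_› q hq
  exact hqmax.eq_of_le hp.ne_top hqp ▸ hqmax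

theorem associatedPrimes_quotient_eq_singleton [IsNoetherianRing R] (hI : I ≠ ⊤)
    (h : ∀ p : Ideal R, p.IsPrime → I ≤ p → p = m) : associatedPrimes R (R ⧸ I) = {m} := by
  have hI_le : ∀ p ∈ associatedPrimes R (R ⧸ I), I ≤ p := fun p hp => by
    simpa [Submodule.annihilator_top, Ideal.annihilator_quotient] using hp.annihilator_le
  have : Nontrivial (R ⧸ I) := Ideal.Quotient.nontrivial_iff.mpr hI
  obtain ⟨p, hp⟩ := associatedPrimes.nonempty R (R ⧸ I)
  refine Set.eq_singleton_iff_unique_mem.mpr ⟨?_, fun q hq => h q hq.isPrime (hI_le q hq)⟩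
  exact h p hp.isPrime (hI_le p hp) ▸ hp

end CommRing

section Homogeneous

variable {σ : Type*}

theorem isUnit_of_mem_homogeneousSubmodule_zero {f : MvPolynomial σ K}
    (hf : f ∈ homogeneousSubmodule σ K 0) (hf0 : f ≠ 0) : IsUnit f := by
  have hC : f = C (coeff 0 f) := by
    rw [← homogeneousComponent_zero, homogeneousComponent_of_mem hf, if_pos rfl]
  rw [hC] at hf0 ⊢
  exact (isUnit_iff_ne_zero.mpr (by simpa using hf0)).map C

theorem isHomogeneous_iff_forall_homogeneousComponent_mem {J : Ideal (MvPolynomial σ K)} :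
    J.IsHomogeneous (homogeneousSubmodule σ K) ↔ ∀ f ∈ J, ∀ d, homogeneousComponent d f ∈ J := by
  have hdec (f : MvPolynomial σ K) (d : ℕ) :
      (DirectSum.decompose (homogeneousSubmodule σ K) f d : MvPolynomial σ K) =
        homogeneousComponent d f :=
    decomposition.decompose'_apply f d
  constructor
  · intro h f hf d
    rw [← hdec]
    exact h d hf
  · intro h d f hf
    rw [hdec]
    exact h f hf d

theorem ne_zero_of_mem_homogeneousSubmodule_of_mem_colon {I J : Ideal (MvPolynomial σ K)}
    {f : MvPolynomial σ K} {d : ℕ} (hf : f ∈ homogeneousSubmodule σ K d) (hJI : ¬J ≤ I)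
    (hfc : f ∈ I.colon J) (hfI : f ∉ I) : d ≠ 0 := by
  rintro rfl
  have hf0 : f ≠ 0 := fun h => hfI (h ▸ I.zero_mem)
  exact hJI (le_of_isUnit_of_mem_colon (isUnit_of_mem_homogeneousSubmodule_zero hf hf0) hfc)

end Homogeneous

theorem irrIdeal_eq_ker_constantCoeff :
    irrIdeal K s = RingHom.ker (constantCoeff : MvPolynomial (Fin s) K →+* K) := by
  ext g
  rw [RingHom.mem_ker, constantCoeff_eq, irrIdeal, ← pow_one (Ideal.span _),
    mem_pow_idealOfVars_iff']
  simp [Finsupp.degree_eq_zero_iff]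

theorem isMaximal_irrIdeal : (irrIdeal K s).IsMaximal := by
  rw [irrIdeal_eq_ker_constantCoeff]
  exact RingHom.ker_isMaximal_of_surjective _ fun c => ⟨C c, constantCoeff_C _ c⟩

theorem le_irrIdeal_of_isHomogeneous {J : Ideal (MvPolynomial (Fin s) K)}
    (hJ : J.IsHomogeneous (homogeneousSubmodule (Fin s) K)) (hJt : J ≠ ⊤) : J ≤ irrIdeal K s := by
  intro f hf
  have hf0 : homogeneousComponent 0 f ∈ J :=
    isHomogeneous_iff_forall_homogeneousComponent_mem.mp hJ f hf 0
  have : homogeneousComponent 0 f = 0 := by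
    by_contra h
    exact hJt (J.eq_top_of_isUnit_mem hf0 (isUnit_of_mem_homogeneousSubmodule_zero
      (homogeneousComponent_mem 0 f) h))
  rw [irrIdeal_eq_ker_constantCoeff, RingHom.mem_ker, constantCoeff_eq]
  simpa [homogeneousComponent_zero] using this

theorem eq_irrIdeal_of_isPrime_of_le {I p : Ideal (MvPolynomial (Fin s) K)}
    (hgr : IsGradedIdeal I) (hdim : ringKrullDim (MvPolynomial (Fin s) K ⧸ I) = 0)
    (hp : p.IsPrime) (hIp : I ≤ p) : p = irrIdeal K s := by
  have : Nontrivial (MvPolynomial (Fin s) K ⧸ I) :=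
    Ideal.Quotient.nontrivial_iff.mpr (ne_top_of_le_ne_top hp.ne_top hIp)
  have : Ring.KrullDimLE 0 (MvPolynomial (Fin s) K ⧸ I) :=
    (ringKrullDimZero_iff_ringKrullDim_eq_zero).mpr hdim
  set 𝒜 := homogeneousSubmodule (Fin s) K
  set q := (p.homogeneousCore 𝒜).toIdeal
  have hIhom : I.IsHomogeneous 𝒜 := isHomogeneous_iff_forall_homogeneousComponent_mem.mpr hgr
  have hIq : I ≤ q :=
    hIhom.toIdeal_homogeneousCore_eq_self.symm.trans_le (Ideal.homogeneousCore_mono 𝒜 hIp)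
  have hq : q.IsMaximal := hp.homogeneousCore.isMaximal_of_le_of_krullDimLE_zero hIq
  have hqp : q = p := hq.eq_of_le hp.ne_top (Ideal.toIdeal_homogeneousCore_le 𝒜 p)
  have hqm : q ≤ irrIdeal K s := le_irrIdeal_of_isHomogeneous
    (p.homogeneousCore 𝒜).isHomogeneous hq.ne_top
  exact hqp ▸ hq.eq_of_le isMaximal_irrIdeal.ne_top hqm

/-- For a graded ideal `I ⊊ m` with `dim(S/I) = 0`, the minimum socle
degree `s(I) = α((I : m)/I)` equals the v-number `v(I)`. -/
theorem socle_degree_eq_vnumber (K : Type*) [Field K] (s : ℕ)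
    (I : Ideal (MvPolynomial (Fin s) K))
    (hgr : IsGradedIdeal I) (hIm : I < irrIdeal K s)
    (hdim : ringKrullDim (MvPolynomial (Fin s) K ⧸ I) = 0) :
    alphaColon I (irrIdeal K s) = vnum I := by
  have hAss : associatedPrimes _ (MvPolynomial (Fin s) K ⧸ I) = {irrIdeal K s} :=
    associatedPrimes_quotient_eq_singleton (ne_top_of_lt hIm)
      fun _ hp hIp => eq_irrIdeal_of_isPrime_of_le hgr hdim hp hIp
  unfold alphaColon vnum
  congr 1
  ext d
  simp only [Set.mem_ofPred_eq, hAss, Set.mem_singleton_iff, exists_eq_left,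
    colon_span_singleton_eq_iff_of_isMaximal isMaximal_irrIdeal]
  refine (and_iff_right_of_imp fun ⟨f, hf, hfc, hfI⟩ => ?_).symm
  exact Nat.one_le_iff_ne_zero.mpr
    (ne_zero_of_mem_homogeneousSubmodule_of_mem_colon hf hIm.not_ge hfc hfI)

end GMDPaper
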